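/- arXiv:2307.11492 — 3 statements merged into one kernel-verified Lean document; each statement's English description precedes it below -/
import Mathlib

section
/- Let ρ be an n×n complex positive semidefinite matrix with trace 1, and let O be an n×n complex matrix satisfying O·Oᴴ ≤ 𝟙 (i.e. 𝟙 − O·Oᴴ is positive semidefinite). If Tr(O·ρ) = 1, then O·ρ = ρ. -/
/-!
Both `O * Oᴴ ≤ 1` and `Oᴴ * O ≤ 1` say that `O` has operator norm at most one, so
`Tr (O ρ Oᴴ) = Tr (Oᴴ O ρ) ≤ Tr ρ = 1`. Expanding, `Tr ((O - 1) ρ (O - 1)ᴴ) = Tr (O ρ Oᴴ) - 1 ≤ 0`,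
so the positive semidefinite matrix `(O - 1) ρ (O - 1)ᴴ` has trace zero. Writing `ρ = Cᴴ C` it is
`((O - 1) Cᴴ) ((O - 1) Cᴴ)ᴴ`, hence `(O - 1) Cᴴ = 0` and `(O - 1) ρ = 0`.
-/

open Matrix
open scoped ComplexOrder

theorem CStarAlgebra.star_mul_self_le_one_iff {A : Type*} [CStarAlgebra A] [PartialOrder A]
    [StarOrderedRing A] {a : A} : star a * a ≤ 1 ↔ a * star a ≤ 1 := by
  rw [← norm_le_one_iff_of_nonneg _ (star_mul_self_nonneg a), CStarRing.norm_star_mul_self,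
    ← norm_le_one_iff_of_nonneg _ (mul_star_self_nonneg a), CStarRing.norm_self_mul_star]

namespace Matrix

variable {n 𝕜 : Type*} [Fintype n] [DecidableEq n] [RCLike 𝕜]

open scoped MatrixOrder Matrix.Norms.L2Operator in
theorem posSemidef_one_sub_conjTranspose_mul_self_iff {O : Matrix n n ℂ} :
    (1 - Oᴴ * O).PosSemidef ↔ (1 - O * Oᴴ).PosSemidef :=
  CStarAlgebra.star_mul_self_le_one_iff (a := O)

open scoped MatrixOrder

theorem PosSemidef.trace_mul_mul_conjTranspose_le {ρ O : Matrix n n 𝕜}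
    (hρ : ρ.PosSemidef) (hO : (1 - Oᴴ * O).PosSemidef) : (O * ρ * Oᴴ).trace ≤ ρ.trace := by
  obtain ⟨C, rfl⟩ := CStarAlgebra.nonneg_iff_eq_star_mul_self.mp hρ.nonneg
  have hC := (hO.mul_mul_conjTranspose_same C).trace_nonneg
  rw [mul_sub, sub_mul, trace_sub, mul_one, sub_nonneg] at hC
  simp only [star_eq_conjTranspose]
  calc (O * (Cᴴ * C) * Oᴴ).trace = ((C * Oᴴ)ᴴ * (C * Oᴴ)).trace := by
        simp only [conjTranspose_mul, conjTranspose_conjTranspose, mul_assoc]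
    _ = (C * (Oᴴ * O) * Cᴴ).trace := by
        rw [trace_mul_comm, conjTranspose_mul, conjTranspose_conjTranspose]
        simp only [mul_assoc]
    _ ≤ (C * Cᴴ).trace := hC
    _ = (Cᴴ * C).trace := trace_mul_comm _ _

theorem PosSemidef.mul_eq_zero_of_trace_mul_mul_conjTranspose_eq_zero {ρ X : Matrix n n 𝕜}
    (hρ : ρ.PosSemidef) (h : (X * ρ * Xᴴ).trace = 0) : X * ρ = 0 := by
  obtain ⟨C, rfl⟩ := CStarAlgebra.nonneg_iff_eq_star_mul_self.mp hρ.nonneg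
  simp only [star_eq_conjTranspose] at h ⊢
  have hXC : X * Cᴴ = 0 := by
    rw [← trace_mul_conjTranspose_self_eq_zero_iff, conjTranspose_mul, conjTranspose_conjTranspose]
    simpa only [mul_assoc] using h
  rw [← mul_assoc, hXC, zero_mul]

end Matrix

/-- Cauchy–Schwarz saturation: if `ρ` is PSD with trace 1,
`O·Oᴴ ≤ 𝟙`, and `Tr(O·ρ) = 1`, then `O·ρ = ρ`. -/
theorem stmt0 {n : ℕ} (ρ O : Matrix (Fin n) (Fin n) ℂ)
    (hρ : ρ.PosSemidef) (htr : ρ.trace = 1)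
    (hO : (1 - O * Oᴴ).PosSemidef)
    (h : (O * ρ).trace = 1) : O * ρ = ρ := by
  have h' : (ρ * Oᴴ).trace = 1 := by
    rw [← hρ.isHermitian.eq, ← conjTranspose_mul, trace_conjTranspose, h, star_one]
  have hle : (O * ρ * Oᴴ).trace ≤ 1 :=
    htr ▸ hρ.trace_mul_mul_conjTranspose_le (posSemidef_one_sub_conjTranspose_mul_self_iff.2 hO)
  have hzero : ((O - 1) * ρ * (O - 1)ᴴ).trace = 0 := by
    refine le_antisymm ?_ (hρ.mul_mul_conjTranspose_same _).trace_nonneg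
    calc ((O - 1) * ρ * (O - 1)ᴴ).trace
        = (O * ρ * Oᴴ).trace - (O * ρ).trace - (ρ * Oᴴ).trace + ρ.trace := by
          simp only [conjTranspose_sub, conjTranspose_one, sub_mul, mul_sub, one_mul, mul_one,
            trace_sub]
          ring
      _ = (O * ρ * Oᴴ).trace - 1 := by rw [h, h', htr]; ring
      _ ≤ 0 := sub_nonpos.2 hle
  simpa only [sub_mul, one_mul, sub_eq_zero] using
    hρ.mul_eq_zero_of_trace_mul_mul_conjTranspose_eq_zero hzero
end

section
/- Let ρ be a positive semidefinite matrix with trace 1 indexed by (Fin 4 × Fin n) × (Fin 4 × Fin n), and let ρ_B be its partial trace over the first factor, i.e. ρ_B(j,j') = Σ_{i∈Fin 4} ρ((i,j),(i,j')). Let B be an n×n complex matrix. If ρ_B is positive definite and both (A₀ ⊗ B)·ρ = ρ and (A₀³ ⊗ Bᴴ)·ρ = ρ hold, then B·Bᴴ = 𝟙 and Bᴴ·B = 𝟙, i.e. B is unitary. -/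
open Matrix
open scoped ComplexOrder Kronecker

/-- The four Bell states `φ₁, φ₂, φ₃, φ₄` in `ℂ² ⊗ ℂ²` (indexed by `Fin 2 × Fin 2`). -/
noncomputable def bell : Fin 4 → (Fin 2 × Fin 2 → ℂ) := fun k x =>
  (if k = 0 then (if x = (0, 0) then 1 else if x = (1, 1) then 1 else 0)
   else if k = 1 then (if x = (0, 0) then 1 else if x = (1, 1) then -1 else 0)
   else if k = 2 then (if x = (0, 1) then 1 else if x = (1, 0) then 1 else 0)
   else (if x = (0, 1) then 1 else if x = (1, 0) then -1 else 0)) / (Real.sqrt 2 : ℂ)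

/-- The trusted party's observable `A₀ = Σ_{k=0}^{3} i^k |φ_{k+1}⟩⟨φ_{k+1}|`. -/
noncomputable def A0 : Matrix (Fin 2 × Fin 2) (Fin 2 × Fin 2) ℂ :=
  ∑ k : Fin 4, Complex.I ^ (k : ℕ) • Matrix.vecMulVec (bell k) (star (bell k))

/-!
In the orthonormal Bell basis `A₀` is diagonal with the fourth roots of unity `iᵏ` as eigenvalues,
so `A₀⁴ = 1`. Multiplying the two hypotheses therefore gives `(1 ⊗ B Bᴴ) ρ = ρ` and
`(1 ⊗ Bᴴ B) ρ = ρ`. Tracing out the first factor turns `(1 ⊗ X) ρ = ρ` into `X ρ_B = ρ_B`,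
and `ρ_B` is invertible, being positive definite.
-/

section

variable {ι n α : Type*} [Fintype ι]

theorem mul_diagonal_mul_conjTranspose_eq_sum [CommSemiring α] [StarRing α] [DecidableEq ι]
    (U : Matrix n ι α) (c : ι → α) :
    U * diagonal c * Uᴴ = ∑ k, c k • vecMulVec (Uᵀ k) (star (Uᵀ k)) := by
  ext i j
  rw [mul_apply]
  simp only [mul_diagonal, Matrix.sum_apply, Matrix.smul_apply, vecMulVec_apply,
    conjTranspose_apply, transpose_apply, Pi.star_apply, smul_eq_mul]
  exact Finset.sum_congr rfl fun k _ => by ring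

theorem conj_pow_succ_of_conjTranspose_mul_self [Semiring α] [StarRing α] [DecidableEq ι]
    [Fintype n] [DecidableEq n] {U : Matrix n ι α} (hU : Uᴴ * U = 1) (D : Matrix ι ι α) (m : ℕ) :
    (U * D * Uᴴ) ^ (m + 1) = U * D ^ (m + 1) * Uᴴ := by
  induction m with
  | zero => simp
  | succ m ih =>
    calc (U * D * Uᴴ) ^ (m + 1 + 1) = U * D ^ (m + 1) * (Uᴴ * U) * D * Uᴴ := by
          rw [pow_succ, ih]; simp only [Matrix.mul_assoc]
      _ = U * D ^ (m + 1 + 1) * Uᴴ := by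
          simp only [hU, Matrix.mul_one, pow_succ D (m + 1), Matrix.mul_assoc]

def traceLeft [AddCommMonoid α] (ρ : Matrix (ι × n) (ι × n) α) : Matrix n n α :=
  of fun j j' : n => ∑ i : ι, ρ (i, j) (i, j')

theorem traceLeft_one_kronecker_mul [CommSemiring α] [DecidableEq ι] [Fintype n]
    (X : Matrix n n α) (ρ : Matrix (ι × n) (ι × n) α) :
    traceLeft (((1 : Matrix ι ι α) ⊗ₖ X) * ρ) = X * traceLeft ρ := by
  ext j j'
  simp only [traceLeft, of_apply, mul_apply, Fintype.sum_prod_type, kroneckerMap_apply, one_apply,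
    ite_mul, one_mul, zero_mul, Finset.sum_ite_irrel, Finset.sum_const_zero, Finset.sum_ite_eq,
    Finset.mem_univ, if_true, Finset.mul_sum]
  exact Finset.sum_comm

theorem eq_one_of_one_kronecker_mul_eq [CommSemiring α] [DecidableEq ι] [Fintype n] [DecidableEq n]
    {X : Matrix n n α} {ρ : Matrix (ι × n) (ι × n) α} (hρ : IsUnit (traceLeft ρ))
    (hX : ((1 : Matrix ι ι α) ⊗ₖ X) * ρ = ρ) : X = 1 := by
  refine hρ.mul_right_cancel ?_
  rw [Matrix.one_mul, ← traceLeft_one_kronecker_mul, hX]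

end

noncomputable def bellMatrix : Matrix (Fin 2 × Fin 2) (Fin 4) ℂ := Matrix.of fun x k => bell k x

lemma inv_sqrt_two_mul_self : (Real.sqrt 2 : ℂ)⁻¹ * (Real.sqrt 2 : ℂ)⁻¹ = 1 / 2 := by
  rw [← mul_inv, ← Complex.ofReal_mul, Real.mul_self_sqrt zero_le_two]; norm_num

lemma bellMatrix_conjTranspose_mul : bellMatrixᴴ * bellMatrix = 1 := by
  ext k l
  simp only [mul_apply, conjTranspose_apply, bellMatrix, of_apply, Fintype.sum_prod_type,
    Fin.sum_univ_two]
  fin_cases k <;> fin_cases l <;> simp [bell, one_apply] <;>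
    first | ring1 | linear_combination (2 : ℂ) * inv_sqrt_two_mul_self

theorem A0_eq_conj :
    A0 = bellMatrix * diagonal (fun k : Fin 4 => Complex.I ^ (k : ℕ)) * bellMatrixᴴ := by
  rw [mul_diagonal_mul_conjTranspose_eq_sum]; rfl

theorem bellMatrix_mul_conjTranspose : bellMatrix * bellMatrixᴴ = 1 :=
  (mul_eq_one_comm_of_card_eq (Fin 4) (Fin 2 × Fin 2) ℂ rfl).mp bellMatrix_conjTranspose_mul

theorem A0_pow_four : A0 ^ 4 = 1 := by
  have hI (k : Fin 4) : (Complex.I ^ (k : ℕ)) ^ 4 = 1 := by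
    rw [← pow_mul, mul_comm, pow_mul, Complex.I_pow_four, one_pow]
  rw [A0_eq_conj, conj_pow_succ_of_conjTranspose_mul_self bellMatrix_conjTranspose_mul,
    diagonal_pow, Pi.pow_def]
  simp only [hI, diagonal_one, Matrix.mul_one, bellMatrix_mul_conjTranspose]

theorem stmt1_general {n : ℕ}
    (ρ : Matrix ((Fin 2 × Fin 2) × Fin n) ((Fin 2 × Fin 2) × Fin n) ℂ)
    (B : Matrix (Fin n) (Fin n) ℂ)
    (hρB : (Matrix.of fun j j' : Fin n => ∑ i : Fin 2 × Fin 2, ρ (i, j) (i, j')).PosDef)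
    (h1 : (A0 ⊗ₖ B) * ρ = ρ)
    (h3 : ((A0 ^ 3) ⊗ₖ Bᴴ) * ρ = ρ) :
    B * Bᴴ = 1 ∧ Bᴴ * B = 1 := by
  have hunit : IsUnit (traceLeft ρ) := hρB.isUnit
  constructor
  · refine eq_one_of_one_kronecker_mul_eq hunit ?_
    rw [← A0_pow_four, pow_succ', mul_kronecker_mul, Matrix.mul_assoc, h3, h1]
  · refine eq_one_of_one_kronecker_mul_eq hunit ?_
    rw [← A0_pow_four, pow_succ, mul_kronecker_mul, Matrix.mul_assoc, h1, h3]

/-- if `ρ` is PSD with trace 1, its partial trace over the first (four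
dimensional) factor is positive definite, and `(A₀ ⊗ B)·ρ = ρ` and `(A₀³ ⊗ Bᴴ)·ρ = ρ`,
then `B` is unitary. -/
theorem stmt1 {n : ℕ}
    (ρ : Matrix ((Fin 2 × Fin 2) × Fin n) ((Fin 2 × Fin 2) × Fin n) ℂ)
    (B : Matrix (Fin n) (Fin n) ℂ)
    (hρ : ρ.PosSemidef) (htr : ρ.trace = 1)
    (hρB : (Matrix.of fun j j' : Fin n => ∑ i : Fin 2 × Fin 2, ρ (i, j) (i, j')).PosDef)
    (h1 : (A0 ⊗ₖ B) * ρ = ρ)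
    (h3 : ((A0 ^ 3) ⊗ₖ Bᴴ) * ρ = ρ) :
    B * Bᴴ = 1 ∧ Bᴴ * B = 1 :=
  stmt1_general ρ B hρB h1 h3
end

section
/- Let P₁ and P₂ be 2×2 Hermitian positive definite complex matrices. If (P₁ ⊗ P₂)² commutes with A₀ (i.e. A₀·(P₁⊗P₂)² = (P₁⊗P₂)²·A₀), then there exist positive reals c₁, c₂ such that P₁ = c₁·𝟙 and P₂ = c₂·𝟙. -/
open Matrix
open scoped ComplexOrder Kronecker

/-!
In Pauli form `A₀ = ((1+i)/2) Z⊗Z + ((i-1)/2) Y⊗Y`; its eigenvectors are the Bell states, with the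
distinct eigenvalues `1, i, -1, -i`, so its commutant consists of Bell-diagonal matrices. For a
product `A ⊗ B` with positive diagonals this kills the off-diagonal entries of `A` and `B` and makes
their diagonals constant. Applied to `A = P₁²`, `B = P₂²` this gives `Pⱼ² = tⱼ • 1` with `tⱼ > 0`,
and then `Pⱼ = √tⱼ • 1` because `(Pⱼ + √tⱼ)(Pⱼ - √tⱼ) = 0` with `Pⱼ + √tⱼ` positive definite.
-/

open Complex in
theorem A0_eq_pauli : A0 = ((1 + I) / 2) • (!![1, 0; 0, -1] ⊗ₖ !![1, 0; 0, -1]) +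
    ((I - 1) / 2) • (!![0, -I; I, 0] ⊗ₖ !![0, -I; I, 0]) := by
  have h2 : ((√2 : ℝ) : ℂ) ^ 2 = 2 := by
    rw [← ofReal_pow, Real.sq_sqrt zero_le_two]; norm_num
  ext ⟨i, k⟩ ⟨j, l⟩
  simp only [A0, Matrix.sum_apply, Matrix.smul_apply, vecMulVec_apply, Fin.sum_univ_four,
    Pi.star_apply]
  fin_cases i <;> fin_cases k <;> fin_cases j <;> fin_cases l <;>
    simp [bell, Prod.ext_iff, pow_succ] <;> field_simp <;> simp only [h2] <;> ring

open Complex in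
theorem entries_eq_of_commute_A0 {M : Matrix (Fin 2 × Fin 2) (Fin 2 × Fin 2) ℂ}
    (h : Commute A0 M) :
    M (0, 0) (0, 1) = 0 ∧ M (0, 0) (1, 0) = 0 ∧ M (1, 1) (0, 1) = 0 ∧ M (1, 1) (1, 0) = 0 ∧
      M (0, 0) (0, 0) = M (1, 1) (1, 1) ∧ M (0, 1) (0, 1) = M (1, 0) (1, 0) := by
  have entry : ∀ x y, (A0 * M) x y = (M * A0) x y := fun x y => by rw [h.eq]
  have e₁ := entry (0, 0) (0, 1)
  have e₂ := entry (0, 0) (1, 0)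
  have e₃ := entry (1, 1) (0, 1)
  have e₄ := entry (1, 1) (1, 0)
  have e₅ := entry (0, 0) (1, 1)
  have e₆ := entry (0, 1) (1, 0)
  simp [A0_eq_pauli, mul_apply, Fintype.sum_prod_type, add_mul, mul_add] at e₁ e₂ e₃ e₄ e₅ e₆
  -- `e₁, …, e₄` form an invertible linear system in the four entries that vanish
  refine ⟨?_, ?_, ?_, ?_, ?_, ?_⟩
  · linear_combination (norm := (ring_nf; simp only [I_sq, I_pow_three]; ring))
      (1 - I) / 8 * (3 * e₁ - e₄ + I * e₂ + I * e₃)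
  · linear_combination (norm := (ring_nf; simp only [I_sq, I_pow_three]; ring))
      (1 - I) / 8 * (3 * e₂ - e₃ + I * e₁ + I * e₄)
  · linear_combination (norm := (ring_nf; simp only [I_sq, I_pow_three]; ring))
      (1 - I) / 8 * (3 * e₃ - e₂ + I * e₁ + I * e₄)
  · linear_combination (norm := (ring_nf; simp only [I_sq, I_pow_three]; ring))
      (1 - I) / 8 * (3 * e₄ - e₁ + I * e₂ + I * e₃)
  · linear_combination (norm := (ring_nf; simp only [I_sq]; ring)) (-1 - I) * e₅
  · linear_combination (norm := (ring_nf; simp only [I_sq]; ring)) (1 + I) * e₆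

theorem eq_smul_one_of_commute_A0_kronecker {A B : Matrix (Fin 2) (Fin 2) ℂ}
    (hA : A.PosDef) (hB : B.PosDef) (h : Commute A0 (A ⊗ₖ B)) :
    A = A 0 0 • 1 ∧ B = B 0 0 • 1 := by
  obtain ⟨hB01, hA01, hA10, hB10, hd₁, hd₂⟩ := entries_eq_of_commute_A0 h
  simp only [kroneckerMap_apply] at hB01 hA01 hA10 hB10 hd₁ hd₂
  have hA00 : A 0 0 ≠ 0 := hA.diag_pos.ne'
  have hA11 : A 1 1 ≠ 0 := hA.diag_pos.ne'
  have hB00 : B 0 0 ≠ 0 := hB.diag_pos.ne'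
  have hB11 : B 1 1 ≠ 0 := hB.diag_pos.ne'
  have hA_diag : A 0 0 = A 1 1 := by
    have : (A 0 0 - A 1 1) * (B 0 0 + B 1 1) = 0 := by linear_combination hd₁ + hd₂
    simpa [sub_eq_zero, (add_pos hB.diag_pos hB.diag_pos).ne'] using this
  have hB_diag : B 0 0 = B 1 1 := by
    have : (A 0 0 + A 1 1) * (B 0 0 - B 1 1) = 0 := by linear_combination hd₁ - hd₂
    simpa [sub_eq_zero, (add_pos hA.diag_pos hA.diag_pos).ne'] using this
  constructor <;> ext i j <;> fin_cases i <;> fin_cases j <;> simp_all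

section PosDef

variable {n 𝕜 : Type*} [Fintype n] [DecidableEq n] [RCLike 𝕜]

theorem Matrix.PosDef.mul_self {P : Matrix n n 𝕜} (hP : P.PosDef) : (P * P).PosDef := by
  simpa [hP.isHermitian.eq] using
    PosDef.conjTranspose_mul_self P (mulVec_injective_iff_isUnit.2 hP.isUnit)

theorem Matrix.PosDef.exists_eq_smul_one_of_mul_self_eq_smul_one [Nonempty n]
    {P : Matrix n n 𝕜} (hP : P.PosDef) {a : 𝕜} (h : P * P = a • 1) :
    ∃ c : ℝ, 0 < c ∧ P = (c : 𝕜) • 1 := by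
  have ha : 0 < a := by
    simpa [h] using hP.mul_self.diag_pos (i := Classical.arbitrary n)
  obtain ⟨t, ht, rfl⟩ := RCLike.pos_iff_exists_ofReal.mp ha
  refine ⟨√t, Real.sqrt_pos.2 ht, ?_⟩
  have hunit : IsUnit (P + (√t : 𝕜) • 1) :=
    (hP.add_posSemidef (PosSemidef.one.smul (by positivity))).isUnit
  rw [← sub_eq_zero]
  refine hunit.mul_left_cancel ?_
  rw [mul_zero, ← ((Commute.one_right P).smul_right _).mul_self_sub_mul_self_eq, h,
    smul_mul_smul_comm, one_mul, ← RCLike.ofReal_mul, Real.mul_self_sqrt ht.le, sub_self]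

end PosDef

/-- if `(P₁ ⊗ P₂)²` commutes with `A₀` for Hermitian positive definite
`P₁, P₂`, then `P₁` and `P₂` are positive multiples of the identity. -/
theorem stmt10 (P₁ P₂ : Matrix (Fin 2) (Fin 2) ℂ)
    (h₁ : P₁.PosDef) (h₂ : P₂.PosDef)
    (hcomm : A0 * (P₁ ⊗ₖ P₂) ^ 2 = (P₁ ⊗ₖ P₂) ^ 2 * A0) :
    ∃ c₁ c₂ : ℝ, 0 < c₁ ∧ 0 < c₂ ∧ P₁ = (c₁ : ℂ) • 1 ∧ P₂ = (c₂ : ℂ) • 1 := by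
  rw [sq, ← mul_kronecker_mul] at hcomm
  obtain ⟨hA, hB⟩ := eq_smul_one_of_commute_A0_kronecker h₁.mul_self h₂.mul_self hcomm
  obtain ⟨c₁, hc₁, rfl⟩ := h₁.exists_eq_smul_one_of_mul_self_eq_smul_one hA
  obtain ⟨c₂, hc₂, rfl⟩ := h₂.exists_eq_smul_one_of_mul_self_eq_smul_one hB
  exact ⟨c₁, c₂, hc₁, hc₂, rfl, rfl⟩
end
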